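/- Let 0 < a ≤ b, let n ≥ −1 be an integer, and let f : (0,∞) → ℝ be (n+1) times α-differentiable with D_α^{n+1} f continuous on (0,∞). Then ∫_a^b (D_α^{n+1} f(s)/(n+1)!)·((b^α − s^α)/(λα))^{n+1} dωs = ∫_a^b R_{n,f}(a,s) dωs. -/

import Mathlib

open Real Set MeasureTheory Filter

noncomputable def poch (x y : ℝ) : ℝ := Real.Gamma (x + y) / Real.Gamma x

noncomputable def vlam (γ β ρ δ p q : ℝ) : ℝ :=
  (Real.Gamma β * poch ρ q) / (Real.Gamma (γ + β) * poch δ p)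

/-- Truncated V-fractional derivative `D_α f t = λ t^(1-α) f' t`. -/
noncomputable def Dal (γ β ρ δ p q α : ℝ) (f : ℝ → ℝ) : ℝ → ℝ :=
  fun t => vlam γ β ρ δ p q * t ^ (1 - α) * deriv f t

/-- `f` is `k` times α-differentiable. -/
def alphaDiff (γ β ρ δ p q α : ℝ) (k : ℕ) (f : ℝ → ℝ) : Prop :=
  ∀ j < k, DifferentiableOn ℝ ((Dal γ β ρ δ p q α)^[j] f) (Set.Ioi 0)

/-- V-fractional integral `∫_a^b f dω = λ⁻¹ ∫_a^b f x · x^(α-1) dx`. -/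
noncomputable def VInt (γ β ρ δ p q α : ℝ) (a b : ℝ) (f : ℝ → ℝ) : ℝ :=
  (vlam γ β ρ δ p q)⁻¹ * ∫ x in a..b, f x * x ^ (α - 1)

/-- Truncated V-fractional Taylor remainder with `m` terms; `R_{n,f} = Rtay (n+1)`. -/
noncomputable def Rtay (γ β ρ δ p q α : ℝ) (m : ℕ) (f : ℝ → ℝ) (t s : ℝ) : ℝ :=
  f s - ∑ k ∈ Finset.range m,
    ((Dal γ β ρ δ p q α)^[k] f t / (Nat.factorial k : ℝ)) *
      ((s ^ α - t ^ α) / (vlam γ β ρ δ p q * α)) ^ k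


/-! With `g s = s ^ α / (λ α)` one has `dω s = dg s` and `D_α h = h' / g'`, so the iterates
`G k = D_α^k f` form a chain with `G k' = g' · G (k + 1)`. In the variable `g` the claim is the
integral form of Taylor's remainder integrated once more against `dg`: integrating by parts
against `(g b - g s) ^ (m + 1) / (m + 1)!` lowers `m` by one and splits off the `m`-th Taylor
term, which integrates to `G m a / (m + 1)! * (g b - g a) ^ (m + 1)`. -/

open scoped Nat
open Finset (range)

section TaylorChain

variable {g g' : ℝ → ℝ} {G : ℕ → ℝ → ℝ} {a b : ℝ}

theorem integral_sub_pow_mul_deriv (hg : ∀ x ∈ uIcc a b, HasDerivAt g (g' x) x)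
    (hg' : ContinuousOn g' (uIcc a b)) (c : ℝ) (k : ℕ) :
    ∫ x in a..b, (g x - c) ^ k * g' x =
      ((g b - c) ^ (k + 1) - (g a - c) ^ (k + 1)) / (k + 1) := by
  have hderiv : ∀ x ∈ uIcc a b,
      HasDerivAt (fun x => (g x - c) ^ (k + 1) / (k + 1)) ((g x - c) ^ k * g' x) x := by
    intro x hx
    refine ((((hg x hx).sub_const c).fun_pow (k + 1)).div_const ((k : ℝ) + 1)).congr_deriv ?_
    push_cast
    field_simp
  have hgc : ContinuousOn g (uIcc a b) := HasDerivAt.continuousOn hg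
  rw [intervalIntegral.integral_eq_sub_of_hasDerivAt hderiv
    (((hgc.sub continuousOn_const).pow k).mul hg').intervalIntegrable]
  ring

theorem integral_taylor_step (hg : ∀ x ∈ uIcc a b, HasDerivAt g (g' x) x)
    (hg' : ContinuousOn g' (uIcc a b)) (m : ℕ)
    (hG : ∀ x ∈ uIcc a b, HasDerivAt (G m) (g' x * G (m + 1) x) x)
    (hGc : ContinuousOn (G (m + 1)) (uIcc a b)) :
    ∫ x in a..b, G (m + 1) x / (m + 1)! * (g b - g x) ^ (m + 1) * g' x =
      (∫ x in a..b, G m x / m ! * (g b - g x) ^ m * g' x) -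
        G m a / (m + 1)! * (g b - g a) ^ (m + 1) := by
  have hgc : ContinuousOn g (uIcc a b) := HasDerivAt.continuousOn hg
  have hGmc : ContinuousOn (G m) (uIcc a b) := HasDerivAt.continuousOn hG
  have hderiv : ∀ x ∈ uIcc a b,
      HasDerivAt (fun x => G m x / (m + 1)! * (g b - g x) ^ (m + 1))
        (G (m + 1) x / (m + 1)! * (g b - g x) ^ (m + 1) * g' x -
          G m x / m ! * (g b - g x) ^ m * g' x) x := by
    intro x hx
    refine (((hG x hx).div_const ((m + 1)! : ℝ)).mul
      (((hg x hx).const_sub (g b)).fun_pow (m + 1))).congr_deriv ?_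
    push_cast [Nat.factorial_succ]
    field_simp
    ring
  have hint : ∀ k, ContinuousOn (G k) (uIcc a b) →
      IntervalIntegrable (fun x => G k x / k ! * (g b - g x) ^ k * g' x) volume a b :=
    fun k hk =>
      (((hk.div_const _).mul ((continuousOn_const.sub hgc).pow k)).mul hg').intervalIntegrable
  have hftc := intervalIntegral.integral_eq_sub_of_hasDerivAt hderiv
    ((hint (m + 1) hGc).sub (hint m hGmc))
  rw [intervalIntegral.integral_sub (hint (m + 1) hGc) (hint m hGmc)] at hftc
  simp only [sub_self, zero_pow m.succ_ne_zero, mul_zero, zero_sub] at hftc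
  linarith

theorem integral_taylor_remainder (hg : ∀ x ∈ uIcc a b, HasDerivAt g (g' x) x)
    (hg' : ContinuousOn g' (uIcc a b)) (m : ℕ)
    (hG : ∀ k < m, ∀ x ∈ uIcc a b, HasDerivAt (G k) (g' x * G (k + 1) x) x)
    (hGc : ContinuousOn (G m) (uIcc a b)) :
    ∫ x in a..b, G m x / m ! * (g b - g x) ^ m * g' x =
      ∫ x in a..b, (G 0 x - ∑ k ∈ range m, G k a / k ! * (g x - g a) ^ k) * g' x := by
  induction m with
  | zero => simp
  | succ m ih =>
    have hgc : ContinuousOn g (uIcc a b) := HasDerivAt.continuousOn hg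
    have hG0c : ContinuousOn (G 0) (uIcc a b) :=
      HasDerivAt.continuousOn (hG 0 m.succ_pos)
    have hGmc : ContinuousOn (G m) (uIcc a b) :=
      HasDerivAt.continuousOn (hG m m.lt_succ_self)
    have hpoly : ∀ k, ContinuousOn (fun x => (g x - g a) ^ k) (uIcc a b) :=
      fun k => (hgc.sub continuousOn_const).pow k
    have hrem : ContinuousOn (fun x => G 0 x - ∑ k ∈ range m, G k a / k ! * (g x - g a) ^ k)
        (uIcc a b) :=
      hG0c.sub (continuousOn_finsetSum _ fun k _ => continuousOn_const.mul (hpoly k))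
    have hsplit :
        ∫ x in a..b, (G 0 x - ∑ k ∈ range (m + 1), G k a / k ! * (g x - g a) ^ k) * g' x =
          (∫ x in a..b, (G 0 x - ∑ k ∈ range m, G k a / k ! * (g x - g a) ^ k) * g' x) -
            G m a / m ! * ∫ x in a..b, (g x - g a) ^ m * g' x := by
      rw [← intervalIntegral.integral_const_mul, ← intervalIntegral.integral_sub
        (hrem.fun_mul hg').intervalIntegrable
        (continuousOn_const.fun_mul ((hpoly m).fun_mul hg')).intervalIntegrable]
      refine intervalIntegral.integral_congr fun x _ => ?_
      simp only [Finset.sum_range_succ]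
      ring
    rw [integral_taylor_step hg hg' m (hG m m.lt_succ_self) hGc,
      ih (fun k hk => hG k (hk.trans m.lt_succ_self)) hGmc, hsplit,
      integral_sub_pow_mul_deriv hg hg']
    push_cast [Nat.factorial_succ, sub_self, zero_pow m.succ_ne_zero, sub_zero]
    field_simp

end TaylorChain

theorem poch_pos {x y : ℝ} (hx : 0 < x) (hxy : 0 < x + y) : 0 < poch x y :=
  div_pos (Gamma_pos_of_pos hxy) (Gamma_pos_of_pos hx)

theorem vlam_pos {γ β ρ δ p q : ℝ} (hβ : 0 < β) (hγβ : 0 < γ + β) (hρ : 0 < ρ)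
    (hρq : 0 < ρ + q) (hδ : 0 < δ) (hδp : 0 < δ + p) : 0 < vlam γ β ρ δ p q :=
  div_pos (mul_pos (Gamma_pos_of_pos hβ) (poch_pos hρ hρq))
    (mul_pos (Gamma_pos_of_pos hγβ) (poch_pos hδ hδp))

theorem VInt_eq_integral (γ β ρ δ p q α a b : ℝ) (h : ℝ → ℝ) :
    VInt γ β ρ δ p q α a b h = ∫ x in a..b, h x * (x ^ (α - 1) / vlam γ β ρ δ p q) := by
  rw [VInt, ← intervalIntegral.integral_const_mul]
  congr 1 with x
  ring

theorem hasDerivAt_of_Dal {γ β ρ δ p q α x : ℝ} {g : ℝ → ℝ} (hL : vlam γ β ρ δ p q ≠ 0)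
    (hx : 0 < x) (hg : DifferentiableAt ℝ g x) :
    HasDerivAt g (x ^ (α - 1) / vlam γ β ρ δ p q * Dal γ β ρ δ p q α g x) x := by
  refine hg.hasDerivAt.congr_deriv ?_
  have hcancel : x ^ (α - 1) * x ^ (1 - α) = 1 := by rw [← rpow_add hx]; simp
  rw [Dal]
  field_simp
  rw [mul_assoc, hcancel, mul_one]

theorem hasDerivAt_rpow_div_mul {L α x : ℝ} (hL : L ≠ 0) (hα : α ≠ 0) (hx : 0 < x) :
    HasDerivAt (fun s => s ^ α / (L * α)) (x ^ (α - 1) / L) x := by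
  refine ((hasDerivAt_rpow_const (Or.inl hx.ne')).div_const (L * α)).congr_deriv ?_
  field_simp

theorem stmt6_general (γ β ρ δ p q α : ℝ) (hγ : 0 < γ) (hβ : 0 < β) (hρ : 0 < ρ) (hδ : 0 < δ)
    (hp : 0 < p) (hq : 0 < q) (hα : 0 < α)
    (a b : ℝ) (ha : 0 < a) (hab : a ≤ b)
    (n : ℤ)
    (f : ℝ → ℝ)
    (hdiff : alphaDiff γ β ρ δ p q α (n + 1).toNat f)
    (hcont : ContinuousOn ((Dal γ β ρ δ p q α)^[(n + 1).toNat] f) (Set.Ioi 0)) :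
    VInt γ β ρ δ p q α a b (fun s =>
        ((Dal γ β ρ δ p q α)^[(n + 1).toNat] f s / (Nat.factorial (n + 1).toNat : ℝ)) *
          ((b ^ α - s ^ α) / (vlam γ β ρ δ p q * α)) ^ (n + 1).toNat) =
      VInt γ β ρ δ p q α a b (fun s => Rtay γ β ρ δ p q α (n + 1).toNat f a s) := by
  set L := vlam γ β ρ δ p q
  have hL : 0 < L := vlam_pos hβ (add_pos hγ hβ) hρ (add_pos hρ hq) hδ (add_pos hδ hp)
  have hpos : ∀ x ∈ uIcc a b, 0 < x := by
    rw [uIcc_of_le hab]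
    exact fun x hx => ha.trans_le hx.1
  have hD : ∀ k < (n + 1).toNat, ∀ x ∈ uIcc a b, HasDerivAt ((Dal γ β ρ δ p q α)^[k] f)
      (x ^ (α - 1) / L * (Dal γ β ρ δ p q α)^[k + 1] f x) x := by
    intro k hk x hx
    rw [Function.iterate_succ_apply']
    exact hasDerivAt_of_Dal hL.ne' (hpos x hx)
      ((hdiff k hk).differentiableAt (Ioi_mem_nhds (hpos x hx)))
  have key := integral_taylor_remainder
    (fun x hx => hasDerivAt_rpow_div_mul hL.ne' hα.ne' (hpos x hx))
    ((continuousOn_id.rpow_const fun x hx => Or.inl (hpos x hx).ne').div_const L)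
    (n + 1).toNat hD (hcont.mono hpos)
  simp only [← sub_div, Function.iterate_zero_apply] at key
  rw [VInt_eq_integral, VInt_eq_integral]
  exact key

theorem stmt6 (γ β ρ δ p q α : ℝ) (hγ : 0 < γ) (hβ : 0 < β) (hρ : 0 < ρ) (hδ : 0 < δ)
    (hp : 0 < p) (hq : 0 < q) (hα : 0 < α) (hα1 : α ≤ 1)
    (a b : ℝ) (ha : 0 < a) (hab : a ≤ b)
    (n : ℤ) (hn : -1 ≤ n)
    (f : ℝ → ℝ)
    (hdiff : alphaDiff γ β ρ δ p q α (n + 1).toNat f)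
    (hcont : ContinuousOn ((Dal γ β ρ δ p q α)^[(n + 1).toNat] f) (Set.Ioi 0)) :
    VInt γ β ρ δ p q α a b (fun s =>
        ((Dal γ β ρ δ p q α)^[(n + 1).toNat] f s / (Nat.factorial (n + 1).toNat : ℝ)) *
          ((b ^ α - s ^ α) / (vlam γ β ρ δ p q * α)) ^ (n + 1).toNat) =
      VInt γ β ρ δ p q α a b (fun s => Rtay γ β ρ δ p q α (n + 1).toNat f a s) :=
  stmt6_general γ β ρ δ p q α hγ hβ hρ hδ hp hq hα a b ha hab n f hdiff hcont
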